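/- Suppose μ : (paths in SL(2,ℝ) starting at I with nondegenerate endpoint) → ℤ satisfies: homotopy invariance through nondegenerate paths; the Maslov compatibility μ(LΦ) − μ(Φ) = 2·maslov(L) for closed loops L; invertibility μ(Φ⁻¹) = −μ(Φ); and normalization μ(t ↦ rotation by πt, t∈[0,1]) = 1. Then for a path Φ whose endpoint Φ(T) has two real positive eigenvalues λ ≠ 1 and 1/λ, μ(Φ) is even. -/

import Mathlib

open Matrix

/-!
A rotation conjugates the endpoint `A = Φ(T)` to an upper triangular matrix with diagonal
`(λ, λ⁻¹)`. Shrinking the angle and the off-diagonal entry to zero moves `A` to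
`D = diag(λ, λ⁻¹)` through matrices with the same eigenvalues, hence nondegenerate, and so
homotopes `Φ` to a path `Ψ` ending at `D`. The hyperbolic path `t ↦ diag(λ^{t/T}, λ^{-t/T})`
also ends at `D`, so `Ψ` is a loop times it and the Maslov axiom makes their indices congruent
mod 2. Finally the hyperbolic path has index `0`: conjugation by the rotations by `sπ/2`,
`s ∈ [0, 1]`, homotopes it to its pointwise inverse, whose index is minus its own.
-/

open Set

namespace ConleyZehnder

local notation "M₂" => Matrix (Fin 2) (Fin 2) ℝ

noncomputable def rot (α : ℝ) : M₂ :=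
  !![Real.cos α, -Real.sin α; Real.sin α, Real.cos α]

noncomputable def rotConj (α : ℝ) (A : M₂) : M₂ :=
  rot α * A * rot (-α)

theorem rot_zero : rot 0 = 1 := by
  simp [rot, one_fin_two]

theorem rot_mul_rot_neg (α : ℝ) : rot α * rot (-α) = 1 := by
  ext i j
  fin_cases i <;> fin_cases j <;> simp [rot, mul_apply, one_apply] <;>
    nlinarith [Real.sin_sq_add_cos_sq α]

theorem det_rot (α : ℝ) : (rot α).det = 1 := by
  simp [rot, det_fin_two_of, ← sq, Real.cos_sq_add_sin_sq]

@[fun_prop]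
theorem continuous_rot : Continuous rot :=
  continuous_matrix fun i j => by fin_cases i <;> fin_cases j <;> simp [rot] <;> fun_prop

theorem rot_mulVec_single_zero (α : ℝ) : rot α *ᵥ Pi.single 0 1 = ![Real.cos α, Real.sin α] := by
  ext i; fin_cases i <;> simp [rot, mulVec, dotProduct]

theorem rotConj_zero (A : M₂) : rotConj 0 A = A := by
  simp [rotConj, rot_zero]

theorem rotConj_rotConj_neg (α : ℝ) (A : M₂) : rotConj α (rotConj (-α) A) = A := by
  simp only [rotConj, neg_neg, ← Matrix.mul_assoc, rot_mul_rot_neg, Matrix.one_mul]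
  rw [Matrix.mul_assoc, rot_mul_rot_neg, Matrix.mul_one]

theorem det_rotConj (α : ℝ) (A : M₂) : (rotConj α A).det = A.det := by
  simp [rotConj, det_rot]

theorem rotConj_sub_one (α : ℝ) (A : M₂) : rotConj α A - 1 = rotConj α (A - 1) := by
  rw [rotConj, rotConj, Matrix.mul_sub, Matrix.sub_mul, Matrix.mul_one, rot_mul_rot_neg]

@[fun_prop]
theorem Continuous.rotConj {X : Type*} [TopologicalSpace X] {f : X → ℝ} {g : X → M₂}
    (hf : Continuous f) (hg : Continuous g) : Continuous fun x => rotConj (f x) (g x) := by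
  unfold ConleyZehnder.rotConj
  fun_prop

@[fun_prop]
theorem ContinuousOn.rotConj {X : Type*} [TopologicalSpace X] {f : X → ℝ} {g : X → M₂}
    {s : Set X} (hf : ContinuousOn f s) (hg : ContinuousOn g s) :
    ContinuousOn (fun x => rotConj (f x) (g x)) s := by
  unfold ConleyZehnder.rotConj
  fun_prop

theorem rotConj_pi_div_two_diagonal (x y : ℝ) :
    rotConj (Real.pi / 2) !![x, 0; 0, y] = !![y, 0; 0, x] := by
  ext i j
  fin_cases i <;> fin_cases j <;> simp [rotConj, rot, mul_apply]

theorem det_upperTriangular {x : ℝ} (hx : x ≠ 0) (b : ℝ) : (!![x, b; 0, x⁻¹] : M₂).det = 1 := by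
  simp [det_fin_two_of, hx]

theorem det_upperTriangular_sub_one_ne_zero {x : ℝ} (hx : x ≠ 1) (b : ℝ) :
    (!![x, b; 0, x⁻¹] - 1 : M₂).det ≠ 0 := by
  have hdet : (!![x, b; 0, x⁻¹] - 1 : M₂).det = (x - 1) * (x⁻¹ - 1) := by
    simp [det_fin_two, one_apply]
  rw [hdet]
  exact mul_ne_zero (sub_ne_zero.mpr hx) (sub_ne_zero.mpr (inv_ne_one.mpr hx))

theorem exists_angle_smul_eq {v : Fin 2 → ℝ} (hv : v ≠ 0) :
    ∃ θ r : ℝ, r ≠ 0 ∧ r • ![Real.cos θ, Real.sin θ] = v := by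
  set z : ℂ := ⟨v 0, v 1⟩
  have hz : z ≠ 0 := fun h => hv <| funext fun i => by
    fin_cases i
    exacts [congrArg Complex.re h, congrArg Complex.im h]
  refine ⟨Complex.arg z, ‖z‖, norm_ne_zero_iff.mpr hz, funext fun i => ?_⟩
  fin_cases i
  exacts [Complex.norm_mul_cos_arg z, Complex.norm_mul_sin_arg z]

theorem exists_rotConj_upperTriangular {A : M₂} (hA : A.det = 1) {lam : ℝ} (hlam : lam ≠ 0)
    {v : Fin 2 → ℝ} (hv0 : v ≠ 0) (hv : A *ᵥ v = lam • v) :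
    ∃ θ b : ℝ, A = rotConj θ !![lam, b; 0, lam⁻¹] := by
  obtain ⟨θ, r, hr, rfl⟩ := exists_angle_smul_eq hv0
  have hu : A *ᵥ ![Real.cos θ, Real.sin θ] = lam • ![Real.cos θ, Real.sin θ] := by
    rw [mulVec_smul, smul_comm] at hv
    exact smul_right_injective _ hr hv
  set B := rotConj (-θ) A
  have hBe : B *ᵥ Pi.single 0 1 = lam • Pi.single 0 1 := by
    have hrot : rot (-θ) * rot θ = 1 := by simpa using rot_mul_rot_neg (-θ)
    rw [show B = rot (-θ) * A * rot θ by simp [B, rotConj], ← mulVec_mulVec, ← mulVec_mulVec,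
      rot_mulVec_single_zero, hu, mulVec_smul, ← rot_mulVec_single_zero, mulVec_mulVec, hrot,
      one_mulVec]
  have hB00 : B 0 0 = lam := by simpa [mulVec, dotProduct] using congrFun hBe 0
  have hB10 : B 1 0 = 0 := by simpa [mulVec, dotProduct] using congrFun hBe 1
  have hB11 : B 1 1 = lam⁻¹ := by
    have hdet : B.det = 1 := by rw [det_rotConj, hA]
    rw [det_fin_two, hB00, hB10] at hdet
    field_simp
    linarith
  refine ⟨θ, B 0 1, ?_⟩
  rw [← hB11, ← hB00, ← hB10, ← eta_fin_two B, rotConj_rotConj_neg]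

theorem exists_nondegenerate_path_to_diagonal {A : M₂} (hA : A.det = 1) {lam : ℝ}
    (hlam : lam ≠ 0) (hlam1 : lam ≠ 1) (hv : ∃ v : Fin 2 → ℝ, v ≠ 0 ∧ A *ᵥ v = lam • v) :
    ∃ p : ℝ → M₂, Continuous p ∧ p 0 = A ∧ p 1 = !![lam, 0; 0, lam⁻¹] ∧
      ∀ σ, (p σ).det = 1 ∧ (p σ - 1).det ≠ 0 := by
  obtain ⟨v, hv0, hv⟩ := hv
  obtain ⟨θ, b, rfl⟩ := exists_rotConj_upperTriangular hA hlam hv0 hv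
  refine ⟨fun σ => rotConj (θ * (1 - σ)) !![lam, (1 - σ) * b; 0, lam⁻¹], ?_, by simp, ?_,
    fun σ => ⟨?_, ?_⟩⟩
  · fun_prop
  · simp [rotConj_zero]
  · rw [det_rotConj, det_upperTriangular hlam]
  · rw [rotConj_sub_one, det_rotConj]
    exact det_upperTriangular_sub_one_ne_zero hlam1 _

def IsSLPath (T : ℝ) (Φ : ℝ → M₂) : Prop :=
  ContinuousOn Φ (Icc 0 T) ∧ Φ 0 = 1 ∧ ∀ t ∈ Icc 0 T, (Φ t).det = 1

def NondegHomotopic (T : ℝ) (Ψ₁ Ψ₂ : ℝ → M₂) : Prop :=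
  ∃ H : ℝ × ℝ → M₂,
    ContinuousOn H (Icc 0 1 ×ˢ Icc 0 T) ∧
    (∀ s ∈ Icc (0 : ℝ) 1, ∀ t ∈ Icc (0 : ℝ) T, (H (s, t)).det = 1) ∧
    (∀ t ∈ Icc (0 : ℝ) T, H (0, t) = Ψ₁ t) ∧
    (∀ t ∈ Icc (0 : ℝ) T, H (1, t) = Ψ₂ t) ∧
    (∀ s ∈ Icc (0 : ℝ) 1, H (s, 0) = 1) ∧
    (∀ s ∈ Icc (0 : ℝ) 1, ((H (s, T)) - 1).det ≠ 0)

variable {T : ℝ}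

theorem NondegHomotopic.isSLPath_right {Ψ₁ Ψ₂ : ℝ → M₂} (hT : 0 ≤ T)
    (h : NondegHomotopic T Ψ₁ Ψ₂) : IsSLPath T Ψ₂ := by
  obtain ⟨H, hcont, hdet, -, hH1, hH0, -⟩ := h
  have h1 : (1 : ℝ) ∈ Icc (0 : ℝ) 1 := right_mem_Icc.mpr zero_le_one
  refine ⟨?_, ?_, fun t ht => hH1 t ht ▸ hdet 1 h1 t ht⟩
  · refine (hcont.comp (Continuous.continuousOn (by fun_prop)) ?_).congr fun t ht => (hH1 t ht).symm
    exact fun t ht => ⟨h1, ht⟩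
  · rw [← hH1 0 (left_mem_Icc.mpr hT), hH0 1 h1]

theorem nondegHomotopic_rotConj {Φ : ℝ → M₂} (hΦ : IsSLPath T Φ) (hnd : (Φ T - 1).det ≠ 0)
    (α : ℝ) : NondegHomotopic T Φ fun t => rotConj α (Φ t) := by
  obtain ⟨hcont, hstart, hdet⟩ := hΦ
  refine ⟨fun q => rotConj (q.1 * α) (Φ q.2), ?_, fun s _ t ht => ?_, fun t _ => ?_,
    fun t _ => ?_, fun s _ => ?_, fun s _ => ?_⟩
  · have : ContinuousOn (fun q : ℝ × ℝ => Φ q.2) (Icc 0 1 ×ˢ Icc 0 T) :=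
      hcont.comp continuous_snd.continuousOn fun q hq => hq.2
    exact ContinuousOn.rotConj (by fun_prop) this
  · simp only [det_rotConj, hdet t ht]
  · simp [rotConj_zero]
  · simp
  · simp [hstart, rotConj, rot_mul_rot_neg]
  · simpa only [rotConj_sub_one, det_rotConj]

theorem exists_nondegHomotopic_endpoint_eq (hT : 0 < T) {Φ : ℝ → M₂} (hΦ : IsSLPath T Φ)
    {p : ℝ → M₂} (hp : Continuous p) (hp0 : p 0 = Φ T) (hpdet : ∀ σ, (p σ).det = 1)
    (hpnd : ∀ σ ∈ Icc (0 : ℝ) 1, (p σ - 1).det ≠ 0) :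
    ∃ Ψ, NondegHomotopic T Φ Ψ ∧ Ψ T = p 1 := by
  obtain ⟨hcont, hstart, hdet⟩ := hΦ
  have hunit : IsUnit (Φ T).det := by rw [hdet T ⟨hT.le, le_rfl⟩]; exact isUnit_one
  have hcancel : ∀ σ, Φ T * ((Φ T)⁻¹ * p σ) = p σ := fun σ => by
    rw [← Matrix.mul_assoc, mul_nonsing_inv _ hunit, Matrix.one_mul]
  have hcdet : ∀ σ, ((Φ T)⁻¹ * p σ).det = 1 := fun σ => by
    rw [det_mul, det_nonsing_inv, hdet T ⟨hT.le, le_rfl⟩, hpdet, Ring.inverse_one, one_mul]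
  refine ⟨fun t => Φ t * ((Φ T)⁻¹ * p (t / T)), ⟨fun q => Φ q.2 * ((Φ T)⁻¹ * p (q.1 * (q.2 / T))),
    ?_, fun s _ t ht => ?_, fun t _ => ?_, fun t _ => ?_, fun s _ => ?_, fun s hs => ?_⟩, ?_⟩
  · exact (hcont.comp continuous_snd.continuousOn fun q hq => hq.2).mul
      (Continuous.continuousOn (by fun_prop))
  · rw [det_mul, hdet t ht, hcdet, one_mul]
  · simp [hp0, nonsing_inv_mul _ hunit]
  · simp
  · simp [hstart, hp0, nonsing_inv_mul _ hunit]
  · simpa [div_self hT.ne', hcancel] using hpnd s hs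
  · simp [div_self hT.ne', hcancel]

theorem inv_diagonal_fin_two {x : ℝ} (hx : x ≠ 0) : (!![x, 0; 0, x⁻¹] : M₂)⁻¹ = !![x⁻¹, 0; 0, x] :=
  inv_eq_left_inv <| by simp [one_fin_two, hx]

noncomputable def hyperbolicPath (lam T t : ℝ) : M₂ :=
  !![lam ^ (t / T), 0; 0, (lam ^ (t / T))⁻¹]

variable {lam : ℝ}

theorem det_hyperbolicPath (hlam : 0 < lam) (t : ℝ) : (hyperbolicPath lam T t).det = 1 :=
  det_upperTriangular (Real.rpow_pos_of_pos hlam _).ne' 0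

theorem isSLPath_hyperbolicPath (hlam : 0 < lam) : IsSLPath T (hyperbolicPath lam T) := by
  have hpow : Continuous fun t : ℝ => lam ^ (t / T) :=
    (Real.continuous_const_rpow hlam.ne').comp (continuous_id.div_const T)
  have hpos (t : ℝ) : lam ^ (t / T) ≠ 0 := (Real.rpow_pos_of_pos hlam _).ne'
  refine ⟨Continuous.continuousOn ?_, by simp [hyperbolicPath, one_fin_two],
    fun t _ => det_hyperbolicPath hlam t⟩
  unfold hyperbolicPath
  fun_prop (disch := exact hpos _)

theorem hyperbolicPath_self (hT : T ≠ 0) : hyperbolicPath lam T T = !![lam, 0; 0, lam⁻¹] := by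
  simp [hyperbolicPath, div_self hT]

theorem rotConj_hyperbolicPath (hlam : 0 < lam) (t : ℝ) :
    rotConj (Real.pi / 2) (hyperbolicPath lam T t) = (hyperbolicPath lam T t)⁻¹ := by
  rw [hyperbolicPath, rotConj_pi_div_two_diagonal,
    inv_diagonal_fin_two (Real.rpow_pos_of_pos hlam _).ne']

section Index

variable {μ : (ℝ → M₂) → ℝ → ℤ}

theorem index_eq_zero_of_rotConj_eq_inv
    (hinv : ∀ Ψ₁ Ψ₂, NondegHomotopic T Ψ₁ Ψ₂ → μ Ψ₁ T = μ Ψ₂ T)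
    (hinvert : ∀ Φ, IsSLPath T Φ → (Φ T - 1).det ≠ 0 → μ (fun t => (Φ t)⁻¹) T = -μ Φ T)
    {Φ : ℝ → M₂} (hΦ : IsSLPath T Φ) (hnd : (Φ T - 1).det ≠ 0) {α : ℝ}
    (hα : ∀ t, rotConj α (Φ t) = (Φ t)⁻¹) : μ Φ T = 0 := by
  have h := hinv _ _ (nondegHomotopic_rotConj hΦ hnd α)
  simp only [hα, hinvert Φ hΦ hnd] at h
  omega

theorem two_dvd_index_sub_of_endpoint_eq
    (hmaslov : ∀ L, IsSLPath T L → L T = 1 → ∃ m : ℤ, ∀ Φ, IsSLPath T Φ → (Φ T - 1).det ≠ 0 →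
      μ (fun t => L t * Φ t) T = μ Φ T + 2 * m)
    {Ψ Φ : ℝ → M₂} (hΨ : IsSLPath T Ψ) (hΦ : IsSLPath T Φ) (hunit : ∀ t, IsUnit (Φ t).det)
    (hnd : (Φ T - 1).det ≠ 0) (hend : Ψ T = Φ T) : 2 ∣ μ Ψ T - μ Φ T := by
  obtain ⟨hΨc, hΨ0, hΨdet⟩ := hΨ
  obtain ⟨hΦc, hΦ0, hΦdet⟩ := hΦ
  have hLΦ : (fun t => Ψ t * (Φ t)⁻¹ * Φ t) = Ψ := funext fun t => by
    rw [Matrix.mul_assoc, nonsing_inv_mul _ (hunit t), Matrix.mul_one]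
  have hinvc : ContinuousOn (fun t => (Φ t)⁻¹) (Icc 0 T) := by
    refine (continuous_id.matrix_adjugate.comp_continuousOn hΦc).congr fun t ht => ?_
    simp [inv_def, hΦdet t ht]
  obtain ⟨m, hm⟩ := hmaslov (fun t => Ψ t * (Φ t)⁻¹)
    ⟨hΨc.mul hinvc, by simp [hΨ0, hΦ0], fun t ht => by simp [hΨdet t ht, hΦdet t ht]⟩
    (by simp [hend, mul_nonsing_inv _ (hunit T)])
  have h := hm Φ ⟨hΦc, hΦ0, hΦdet⟩ hnd
  rw [hLΦ] at h
  exact ⟨m, by omega⟩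

end Index

end ConleyZehnder

open ConleyZehnder

theorem cz_index_even_of_positively_hyperbolic_general
    (μ : (ℝ → Matrix (Fin 2) (Fin 2) ℝ) → ℝ → ℤ)
    -- homotopy invariance through nondegenerate paths
    (hinv : ∀ T : ℝ, 0 < T → ∀ Ψ₁ Ψ₂ : ℝ → Matrix (Fin 2) (Fin 2) ℝ,
      (∃ H : ℝ × ℝ → Matrix (Fin 2) (Fin 2) ℝ,
        ContinuousOn H (Set.Icc 0 1 ×ˢ Set.Icc 0 T) ∧
        (∀ s ∈ Set.Icc (0 : ℝ) 1, ∀ t ∈ Set.Icc (0 : ℝ) T, (H (s, t)).det = 1) ∧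
        (∀ t ∈ Set.Icc (0 : ℝ) T, H (0, t) = Ψ₁ t) ∧
        (∀ t ∈ Set.Icc (0 : ℝ) T, H (1, t) = Ψ₂ t) ∧
        (∀ s ∈ Set.Icc (0 : ℝ) 1, H (s, 0) = 1) ∧
        (∀ s ∈ Set.Icc (0 : ℝ) 1, ((H (s, T)) - 1).det ≠ 0)) →
      μ Ψ₁ T = μ Ψ₂ T)
    -- Maslov compatibility: for every closed loop `L`, `μ(LΦ) = μ(Φ) + 2·maslov(L)`
    (hmaslov : ∀ T : ℝ, 0 < T → ∀ L : ℝ → Matrix (Fin 2) (Fin 2) ℝ,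
      ContinuousOn L (Set.Icc 0 T) → L 0 = 1 → L T = 1 →
      (∀ t ∈ Set.Icc (0 : ℝ) T, (L t).det = 1) →
      ∃ m : ℤ, ∀ Φ : ℝ → Matrix (Fin 2) (Fin 2) ℝ,
        ContinuousOn Φ (Set.Icc 0 T) → Φ 0 = 1 →
        (∀ t ∈ Set.Icc (0 : ℝ) T, (Φ t).det = 1) → ((Φ T) - 1).det ≠ 0 →
        μ (fun t => L t * Φ t) T = μ Φ T + 2 * m)
    -- invertibility
    (hinvert : ∀ T : ℝ, 0 < T → ∀ Φ : ℝ → Matrix (Fin 2) (Fin 2) ℝ,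
      ContinuousOn Φ (Set.Icc 0 T) → Φ 0 = 1 →
      (∀ t ∈ Set.Icc (0 : ℝ) T, (Φ t).det = 1) → ((Φ T) - 1).det ≠ 0 →
      μ (fun t => (Φ t)⁻¹) T = - μ Φ T)
    -- a path with positively hyperbolic endpoint:
    (T : ℝ) (hT : 0 < T) (Φ : ℝ → Matrix (Fin 2) (Fin 2) ℝ)
    (hcont : ContinuousOn Φ (Set.Icc 0 T)) (hstart : Φ 0 = 1)
    (hdet : ∀ t ∈ Set.Icc (0 : ℝ) T, (Φ t).det = 1)
    (lam : ℝ) (hlam : 0 < lam) (hlam1 : lam ≠ 1)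
    (hv : ∃ v : Fin 2 → ℝ, v ≠ 0 ∧ (Φ T).mulVec v = lam • v) :
    2 ∣ μ Φ T := by
  obtain ⟨p, hp, hp0, hp1, hpSL⟩ :=
    exists_nondegenerate_path_to_diagonal (hdet T ⟨hT.le, le_rfl⟩) hlam.ne' hlam1 hv
  obtain ⟨Ψ, hΦΨ, hΨT⟩ := exists_nondegHomotopic_endpoint_eq hT ⟨hcont, hstart, hdet⟩ hp hp0
    (fun σ => (hpSL σ).1) (fun σ _ => (hpSL σ).2)
  have hhyp : IsSLPath T (hyperbolicPath lam T) := isSLPath_hyperbolicPath hlam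
  have hhypT : hyperbolicPath lam T T = !![lam, 0; 0, lam⁻¹] := hyperbolicPath_self hT.ne'
  have hhypnd : (hyperbolicPath lam T T - 1).det ≠ 0 := by
    rw [hhypT]
    exact det_upperTriangular_sub_one_ne_zero hlam1 0
  have hzero : μ (hyperbolicPath lam T) T = 0 :=
    index_eq_zero_of_rotConj_eq_inv (hinv T hT)
      (fun Ψ ⟨h₁, h₂, h₃⟩ => hinvert T hT Ψ h₁ h₂ h₃) hhyp hhypnd (rotConj_hyperbolicPath hlam)
  have hparity : 2 ∣ μ Ψ T - μ (hyperbolicPath lam T) T :=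
    two_dvd_index_sub_of_endpoint_eq (fun L ⟨h₁, h₂, h₃⟩ hL =>
        (hmaslov T hT L h₁ h₂ hL h₃).imp fun _ hm Ψ hΨ => hm Ψ hΨ.1 hΨ.2.1 hΨ.2.2)
      (hΦΨ.isSLPath_right hT.le) hhyp (fun t => by simp [det_hyperbolicPath hlam t]) hhypnd
      (hΨT.trans (hp1.trans hhypT.symm))
  rw [hinv T hT Φ Ψ hΦΨ]
  simpa [hzero] using hparity

/-- Parity of the Conley–Zehnder index: any index `μ` on paths in `SL(2,ℝ)` starting at `I`
with nondegenerate endpoint, satisfying homotopy invariance, Maslov compatibility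
(`μ(LΦ) − μ(Φ)` is twice an integer depending only on the loop `L`), invertibility, and
normalization, is even on any path whose endpoint has two positive real eigenvalues
`λ ≠ 1` and `1/λ`. -/
theorem cz_index_even_of_positively_hyperbolic
    (μ : (ℝ → Matrix (Fin 2) (Fin 2) ℝ) → ℝ → ℤ)
    -- homotopy invariance through nondegenerate paths
    (hinv : ∀ T : ℝ, 0 < T → ∀ Ψ₁ Ψ₂ : ℝ → Matrix (Fin 2) (Fin 2) ℝ,
      (∃ H : ℝ × ℝ → Matrix (Fin 2) (Fin 2) ℝ,
        ContinuousOn H (Set.Icc 0 1 ×ˢ Set.Icc 0 T) ∧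
        (∀ s ∈ Set.Icc (0 : ℝ) 1, ∀ t ∈ Set.Icc (0 : ℝ) T, (H (s, t)).det = 1) ∧
        (∀ t ∈ Set.Icc (0 : ℝ) T, H (0, t) = Ψ₁ t) ∧
        (∀ t ∈ Set.Icc (0 : ℝ) T, H (1, t) = Ψ₂ t) ∧
        (∀ s ∈ Set.Icc (0 : ℝ) 1, H (s, 0) = 1) ∧
        (∀ s ∈ Set.Icc (0 : ℝ) 1, ((H (s, T)) - 1).det ≠ 0)) →
      μ Ψ₁ T = μ Ψ₂ T)
    -- Maslov compatibility: for every closed loop `L`, `μ(LΦ) = μ(Φ) + 2·maslov(L)`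
    (hmaslov : ∀ T : ℝ, 0 < T → ∀ L : ℝ → Matrix (Fin 2) (Fin 2) ℝ,
      ContinuousOn L (Set.Icc 0 T) → L 0 = 1 → L T = 1 →
      (∀ t ∈ Set.Icc (0 : ℝ) T, (L t).det = 1) →
      ∃ m : ℤ, ∀ Φ : ℝ → Matrix (Fin 2) (Fin 2) ℝ,
        ContinuousOn Φ (Set.Icc 0 T) → Φ 0 = 1 →
        (∀ t ∈ Set.Icc (0 : ℝ) T, (Φ t).det = 1) → ((Φ T) - 1).det ≠ 0 →
        μ (fun t => L t * Φ t) T = μ Φ T + 2 * m)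
    -- invertibility
    (hinvert : ∀ T : ℝ, 0 < T → ∀ Φ : ℝ → Matrix (Fin 2) (Fin 2) ℝ,
      ContinuousOn Φ (Set.Icc 0 T) → Φ 0 = 1 →
      (∀ t ∈ Set.Icc (0 : ℝ) T, (Φ t).det = 1) → ((Φ T) - 1).det ≠ 0 →
      μ (fun t => (Φ t)⁻¹) T = - μ Φ T)
    -- normalization: the half-turn rotation path has index 1
    (hnorm : μ (fun t => !![Real.cos (Real.pi * t), -Real.sin (Real.pi * t);
        Real.sin (Real.pi * t), Real.cos (Real.pi * t)]) 1 = 1)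
    -- a path with positively hyperbolic endpoint:
    (T : ℝ) (hT : 0 < T) (Φ : ℝ → Matrix (Fin 2) (Fin 2) ℝ)
    (hcont : ContinuousOn Φ (Set.Icc 0 T)) (hstart : Φ 0 = 1)
    (hdet : ∀ t ∈ Set.Icc (0 : ℝ) T, (Φ t).det = 1)
    (lam : ℝ) (hlam : 0 < lam) (hlam1 : lam ≠ 1)
    (hv : ∃ v : Fin 2 → ℝ, v ≠ 0 ∧ (Φ T).mulVec v = lam • v)
    (hw : ∃ w : Fin 2 → ℝ, w ≠ 0 ∧ (Φ T).mulVec w = lam⁻¹ • w) :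
    2 ∣ μ Φ T :=
  cz_index_even_of_positively_hyperbolic_general μ hinv hmaslov hinvert T hT Φ hcont hstart hdet lam
    hlam hlam1 hv
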